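/- arXiv:2501.01655 — 7 statements merged into one kernel-verified Lean document; each statement's English description precedes it below -/
import Mathlib

section
/- Let A ∈ ℝ^{m×n}, C ∈ ℝ^{p×n} and G = AᵀA + CᵀC. If x is a minimizer of ‖Ax − b‖₂ over the set S = {x : ‖Cx − d‖₂ is minimal}, then for any z in the null space of G, x + z is also such a minimizer, and the orthogonal projection of x onto the range of G is also such a minimizer. -/
open Matrix LinearMap

/-! A solution can be moved along any direction `z` with `A z = 0` and `C z = 0` without changing
either residual.  These directions are exactly `N(G)`, because `⟪v, G v⟫ = ‖A v‖² + ‖C v‖²`;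
and since `G` is symmetric, `x` minus its projection onto `R(G)` lies in `R(G)ᗮ = N(G)`. -/

section Gram
variable {𝕜 E F H : Type*} [RCLike 𝕜]
  [NormedAddCommGroup E] [InnerProductSpace 𝕜 E] [FiniteDimensional 𝕜 E]
  [NormedAddCommGroup F] [InnerProductSpace 𝕜 F] [FiniteDimensional 𝕜 F]
  [NormedAddCommGroup H] [InnerProductSpace 𝕜 H] [FiniteDimensional 𝕜 H]

theorem LinearMap.ker_adjoint_comp_self_add_adjoint_comp_self (A : E →ₗ[𝕜] F)
    (C : E →ₗ[𝕜] H) :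
    ker (adjoint A ∘ₗ A + adjoint C ∘ₗ C) = ker A ⊓ ker C := by
  ext v
  simp only [Submodule.mem_inf, mem_ker]
  constructor
  · intro hv
    have hsum : ‖A v‖ ^ 2 + ‖C v‖ ^ 2 = 0 := by
      have := congrArg (fun w => RCLike.re (inner 𝕜 v w)) hv
      simpa [inner_add_right, adjoint_inner_right, inner_self_eq_norm_sq] using this
    have hAv := sq_nonneg ‖A v‖
    have hCv := sq_nonneg ‖C v‖
    exact ⟨norm_eq_zero.mp (pow_eq_zero_iff two_ne_zero |>.mp (by linarith)),
      norm_eq_zero.mp (pow_eq_zero_iff two_ne_zero |>.mp (by linarith))⟩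
  · rintro ⟨hA, hC⟩
    simp [hA, hC]
end Gram

theorem Matrix.toEuclideanLin_transpose_mul_self {m n : Type*} [Fintype m] [Fintype n]
    [DecidableEq m] [DecidableEq n] (A : Matrix m n ℝ) :
    toEuclideanLin (Aᵀ * A) = adjoint (toEuclideanLin A) ∘ₗ toEuclideanLin A := by
  rw [← toEuclideanLin_conjTranspose_eq_adjoint, conjTranspose_eq_transpose_of_trivial]
  exact toLpLin_mul _ _ _ _ _

theorem solves_lse_of_sub_mem_ker {E F H : Type*} [AddCommGroup E] [Module ℝ E]
    [SeminormedAddCommGroup F] [Module ℝ F] [SeminormedAddCommGroup H] [Module ℝ H]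
    {A : E →ₗ[ℝ] F} {C : E →ₗ[ℝ] H} {b : F} {d : H} {S : Set E}
    (hS : S = {x | ∀ y, ‖C x - d‖ ≤ ‖C y - d‖}) {x w : E} (hxS : x ∈ S)
    (hxmin : ∀ y ∈ S, ‖A x - b‖ ≤ ‖A y - b‖) (hw : w - x ∈ ker A ⊓ ker C) :
    w ∈ S ∧ ∀ y ∈ S, ‖A w - b‖ ≤ ‖A y - b‖ := by
  obtain ⟨hA, hC⟩ := hw
  have hAw : A w = A x := sub_eq_zero.mp (by simpa using hA)
  have hCw : C w = C x := sub_eq_zero.mp (by simpa using hC)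
  subst hS
  exact ⟨fun y => hCw ▸ hxS y, fun y hy => hAw ▸ hxmin y hy⟩

/-- If `x` solves the LSE problem `min ‖Ax−b‖₂ s.t. x ∈ S`, `S` the set of minimizers of
`‖Cx−d‖₂`, then `x + z` also solves it for any `z ∈ N(G)`, `G = AᵀA + CᵀC`, and the
orthogonal projection of `x` onto `R(G)` also solves it. -/
theorem lse_solution_structure (m n p : ℕ) (A : Matrix (Fin m) (Fin n) ℝ)
    (C : Matrix (Fin p) (Fin n) ℝ) (b : EuclideanSpace ℝ (Fin m)) (d : EuclideanSpace ℝ (Fin p))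
    (S : Set (EuclideanSpace ℝ (Fin n)))
    (hS : S = {x | ∀ y, ‖Matrix.toEuclideanLin C x - d‖ ≤ ‖Matrix.toEuclideanLin C y - d‖})
    (x : EuclideanSpace ℝ (Fin n))
    (hxS : x ∈ S)
    (hxmin : ∀ y ∈ S, ‖Matrix.toEuclideanLin A x - b‖ ≤ ‖Matrix.toEuclideanLin A y - b‖) :
    (∀ z ∈ LinearMap.ker (Matrix.toEuclideanLin (Aᵀ * A + Cᵀ * C)),
        x + z ∈ S ∧
        ∀ y ∈ S, ‖Matrix.toEuclideanLin A (x + z) - b‖ ≤ ‖Matrix.toEuclideanLin A y - b‖) ∧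
    ((↑(Submodule.orthogonalProjectionOnto
          (LinearMap.range (Matrix.toEuclideanLin (Aᵀ * A + Cᵀ * C))) x) :
        EuclideanSpace ℝ (Fin n)) ∈ S ∧
      ∀ y ∈ S,
        ‖Matrix.toEuclideanLin A
            (↑(Submodule.orthogonalProjectionOnto
                (LinearMap.range (Matrix.toEuclideanLin (Aᵀ * A + Cᵀ * C))) x)) - b‖ ≤
          ‖Matrix.toEuclideanLin A y - b‖) := by
  set G := toEuclideanLin (Aᵀ * A + Cᵀ * C) with hGdef
  have hG : G = adjoint (toEuclideanLin A) ∘ₗ toEuclideanLin A +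
      adjoint (toEuclideanLin C) ∘ₗ toEuclideanLin C := by
    rw [hGdef, map_add, toEuclideanLin_transpose_mul_self, toEuclideanLin_transpose_mul_self]
  have hker : ker G = ker (toEuclideanLin A) ⊓ ker (toEuclideanLin C) := by
    rw [hG, ker_adjoint_comp_self_add_adjoint_comp_self]
  have hsolves := fun w (hw : w - x ∈ ker G) =>
    solves_lse_of_sub_mem_ker hS hxS hxmin (hker ▸ hw)
  refine ⟨fun z hz => hsolves (x + z) (by simpa using hz), hsolves _ ?_⟩
  have hsymm : G.IsSymmetric := hG ▸ (isSymmetric_adjoint_comp_self _).add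
    (isSymmetric_adjoint_comp_self _)
  rw [← neg_mem_iff, neg_sub, ← hsymm.orthogonal_range]
  exact Submodule.sub_starProjection_mem_orthogonal x
end

section
/- Let A ∈ ℝ^{m×n}, C ∈ ℝ^{p×n}, b ∈ ℝᵐ, d ∈ ℝᵖ, and let A† be the Moore–Penrose pseudoinverse of A. A vector x minimizes ‖Ax−b‖₂ over the set of minimizers of ‖Cx−d‖₂ if and only if the vector x̃ = x − A†b minimizes ‖Ax̃‖₂ over the set of minimizers of ‖Cx̃ − (d − CA†b)‖₂. -/
open Matrix RealInnerProductSpace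

private lemma quad_aux {a c : ℝ} (ha : 0 ≤ a) (h : ∀ t : ℝ, 0 ≤ t ^ 2 * a + 2 * t * c) :
    c = 0 := by
  by_contra hc
  have hpos : 0 < a + 1 := by linarith
  have hne : a + 1 ≠ 0 := ne_of_gt hpos
  have h1 := h (-c / (a + 1))
  have h2 : 0 ≤ ((-c / (a + 1)) ^ 2 * a + 2 * (-c / (a + 1)) * c) * (a + 1) ^ 2 :=
    mul_nonneg h1 (sq_nonneg _)
  have h3 : ((-c / (a + 1)) ^ 2 * a + 2 * (-c / (a + 1)) * c) * (a + 1) ^ 2 =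
      c ^ 2 * a - 2 * c ^ 2 * (a + 1) := by
    field_simp
    ring
  have hcc : 0 < c ^ 2 := by positivity
  nlinarith [h2, h3, hcc, ha]

/-- `x` solves the LSE problem `min ‖Ax−b‖ s.t. ‖Cx−d‖ minimal` iff `x̃ = x − A†b` solves the
GLS problem `min ‖Ax̃‖ s.t. ‖Cx̃ − (d − CA†b)‖ minimal`, where `A†b` is the minimum 2-norm
minimizer of `‖Ax − b‖` (Moore–Penrose pseudoinverse applied to `b`). -/
theorem lse_iff_gls (m n p : ℕ) (A : Matrix (Fin m) (Fin n) ℝ) (C : Matrix (Fin p) (Fin n) ℝ)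
    (b : EuclideanSpace ℝ (Fin m)) (d : EuclideanSpace ℝ (Fin p))
    (Adag_b : EuclideanSpace ℝ (Fin n))
    (hAdag_min : ∀ y, ‖Matrix.toEuclideanLin A Adag_b - b‖ ≤ ‖Matrix.toEuclideanLin A y - b‖)
    (hAdag_norm : ∀ y, (∀ z, ‖Matrix.toEuclideanLin A y - b‖ ≤ ‖Matrix.toEuclideanLin A z - b‖) →
      ‖Adag_b‖ ≤ ‖y‖)
    (x : EuclideanSpace ℝ (Fin n)) :
    ((∀ y, ‖Matrix.toEuclideanLin C x - d‖ ≤ ‖Matrix.toEuclideanLin C y - d‖) ∧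
      (∀ y, (∀ z, ‖Matrix.toEuclideanLin C y - d‖ ≤ ‖Matrix.toEuclideanLin C z - d‖) →
        ‖Matrix.toEuclideanLin A x - b‖ ≤ ‖Matrix.toEuclideanLin A y - b‖)) ↔
    ((∀ y, ‖Matrix.toEuclideanLin C (x - Adag_b) - (d - Matrix.toEuclideanLin C Adag_b)‖ ≤
        ‖Matrix.toEuclideanLin C y - (d - Matrix.toEuclideanLin C Adag_b)‖) ∧
      (∀ y, (∀ z, ‖Matrix.toEuclideanLin C y - (d - Matrix.toEuclideanLin C Adag_b)‖ ≤
          ‖Matrix.toEuclideanLin C z - (d - Matrix.toEuclideanLin C Adag_b)‖) →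
        ‖Matrix.toEuclideanLin A (x - Adag_b)‖ ≤ ‖Matrix.toEuclideanLin A y‖)) := by
  set T := Matrix.toEuclideanLin A with hT
  set S := Matrix.toEuclideanLin C with hS
  -- orthogonality of residual to range of A
  have key : ∀ u : EuclideanSpace ℝ (Fin n), ((inner ℝ (T u) (T Adag_b - b) : ℝ) = 0) := by
    intro u
    apply quad_aux (sq_nonneg ‖T u‖)
    intro t
    have h1 := hAdag_min (Adag_b + t • u)
    have h2 : T (Adag_b + t • u) - b = (T Adag_b - b) + t • T u := by
      rw [map_add, _root_.map_smul]; abel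
    have h3 : ‖T Adag_b - b‖ ^ 2 ≤ ‖(T Adag_b - b) + t • T u‖ ^ 2 := by
      rw [← h2]
      exact pow_le_pow_left₀ (norm_nonneg _) h1 2
    rw [norm_add_sq_real, real_inner_smul_right, norm_smul, mul_pow] at h3
    have hcomm : (inner ℝ (T Adag_b - b) (T u) : ℝ) = inner ℝ (T u) (T Adag_b - b) := real_inner_comm _ _
    simp only [Real.norm_eq_abs, sq_abs] at h3
    rw [hcomm] at h3
    linarith [h3]
  -- Pythagoras
  have pyth : ∀ z : EuclideanSpace ℝ (Fin n),
      ‖T z - b‖ ^ 2 = ‖T (z - Adag_b)‖ ^ 2 + ‖T Adag_b - b‖ ^ 2 := by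
    intro z
    have h2 : T z - b = T (z - Adag_b) + (T Adag_b - b) := by
      rw [map_sub]; abel
    rw [h2, norm_add_sq_real, key (z - Adag_b)]
    ring
  have cmp : ∀ z w : EuclideanSpace ℝ (Fin n),
      (‖T z - b‖ ≤ ‖T w - b‖ ↔ ‖T (z - Adag_b)‖ ≤ ‖T (w - Adag_b)‖) := by
    intro z w
    constructor <;> intro h
    · have h3 : ‖T z - b‖ ^ 2 ≤ ‖T w - b‖ ^ 2 := pow_le_pow_left₀ (norm_nonneg _) h 2
      rw [pyth z, pyth w] at h3
      nlinarith [norm_nonneg (T (z - Adag_b)), norm_nonneg (T (w - Adag_b))]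
    · have h3 : ‖T (z - Adag_b)‖ ^ 2 ≤ ‖T (w - Adag_b)‖ ^ 2 :=
        pow_le_pow_left₀ (norm_nonneg _) h 2
      nlinarith [pyth z, pyth w, norm_nonneg (T z - b), norm_nonneg (T w - b)]
  -- translation identity for C
  have Sid : ∀ z : EuclideanSpace ℝ (Fin n),
      S (z - Adag_b) - (d - S Adag_b) = S z - d := by
    intro z
    rw [map_sub]; abel
  constructor
  · rintro ⟨h1, h2⟩
    constructor
    · intro y
      rw [Sid x]
      have : S y - (d - S Adag_b) = S (y + Adag_b) - d := by
        rw [map_add]; abel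
      rw [this]
      exact h1 (y + Adag_b)
    · intro y hy
      have hy' : ∀ z, ‖S (y + Adag_b) - d‖ ≤ ‖S z - d‖ := by
        intro z
        have e1 : S (y + Adag_b) - d = S y - (d - S Adag_b) := by rw [map_add]; abel
        have := hy (z - Adag_b)
        rw [Sid z] at this
        rw [e1]; exact this
      have := h2 (y + Adag_b) hy'
      have hc := (cmp x (y + Adag_b)).mp this
      have e2 : y + Adag_b - Adag_b = y := by abel
      rwa [e2] at hc
  · rintro ⟨h1, h2⟩
    constructor
    · intro y
      have := h1 (y - Adag_b)
      rw [Sid x, Sid y] at this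
      exact this
    · intro y hy
      have hy' : ∀ z, ‖S (y - Adag_b) - (d - S Adag_b)‖ ≤ ‖S z - (d - S Adag_b)‖ := by
        intro z
        rw [Sid y]
        have e1 : S z - (d - S Adag_b) = S (z + Adag_b) - d := by rw [map_add]; abel
        rw [e1]; exact hy (z + Adag_b)
      have := h2 (y - Adag_b) hy'
      exact (cmp x y).mpr this
end

section
/- Let A ∈ ℝ^{m×n}, C ∈ ℝ^{p×n}, b ∈ ℝᵐ, d ∈ ℝᵖ. Denote by C_A† the weighted pseudoinverse of C, and by A_{N(C)}† the map sending b to the minimum 2-norm minimizer of ‖Ax−b‖₂ over x ∈ N(C). Then the minimum 2-norm solution of the LSE problem (min ‖Ax−b‖₂ subject to ‖Cx−d‖₂ minimal) can be written as x† = C†d + A_{N(C)}†(b − A C†d), where C† is the Moore–Penrose pseudoinverse of C. -/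
/-! Every least-squares solution of `Cx = d` is `C†d + v` with `v ∈ N(C)`, since a strictly convex
norm has a unique closest point in the range of `C`. Minimality of `‖C†d‖` on this affine set
makes `C†d` orthogonal to `N(C)`. So the LSE problem is the problem of minimizing
`‖Av - (b - AC†d)‖` over `v ∈ N(C)`, and the norm of `C†d + v` is minimal exactly when `‖v‖` is,
by Pythagoras. -/

open scoped InnerProductSpace

theorem real_inner_eq_zero_of_forall_norm_le_norm_add_smul {E : Type*} [NormedAddCommGroup E]
    [InnerProductSpace ℝ E] {x v : E} (h : ∀ t : ℝ, ‖x‖ ≤ ‖x + t • v‖) : ⟪x, v⟫_ℝ = 0 := by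
  set c := ⟪x, v⟫_ℝ
  -- expand `‖x‖² ≤ ‖x + t v‖²` at `t = -c / (‖v‖² + 1)`
  have hk : 0 < ‖v‖ ^ 2 + 1 := by positivity
  have hsq := pow_le_pow_left₀ (norm_nonneg x) (h (-c / (‖v‖ ^ 2 + 1))) 2
  rw [norm_add_sq_real, real_inner_smul_right, norm_smul, mul_pow, Real.norm_eq_abs, sq_abs] at hsq
  have : c ^ 2 * (‖v‖ ^ 2 + 2) ≤ 0 := by
    field_simp at hsq
    nlinarith
  nlinarith [sq_nonneg c, sq_nonneg ‖v‖]

theorem norm_add_le_norm_add_of_inner_eq_zero {E : Type*} [NormedAddCommGroup E]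
    [InnerProductSpace ℝ E] {c u v : E} (hu : ⟪c, u⟫_ℝ = 0) (hv : ⟪c, v⟫_ℝ = 0)
    (huv : ‖u‖ ≤ ‖v‖) : ‖c + u‖ ≤ ‖c + v‖ := by
  have hsq : ‖c + u‖ ^ 2 ≤ ‖c + v‖ ^ 2 := by
    rw [norm_add_sq_real, norm_add_sq_real, hu, hv]
    gcongr
  exact (pow_le_pow_iff_left₀ (norm_nonneg _) (norm_nonneg _) two_ne_zero).mp hsq

section LeastSquares

variable {E F G : Type*} [NormedAddCommGroup E] [InnerProductSpace ℝ E]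
  [NormedAddCommGroup G] [NormedSpace ℝ G]
  {T : E →ₗ[ℝ] G} {d : G} {x y : E}

theorem LinearMap.eq_of_forall_norm_map_sub_le [StrictConvexSpace ℝ G]
    (hx : ∀ z, ‖T x - d‖ ≤ ‖T z - d‖) (hy : ∀ z, ‖T y - d‖ ≤ ‖T z - d‖) : T x = T y := by
  by_contra hne
  have hmid : T ((1 / 2 : ℝ) • (x + y)) - d = (1 / 2 : ℝ) • ((T x - d) + (T y - d)) := by
    rw [map_smul, map_add]; module
  have hlt := (norm_midpoint_lt_iff (le_antisymm (hx y) (hy x))).mpr (sub_left_injective.ne hne)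
  exact (hx _).not_gt (hmid ▸ hlt)

theorem LinearMap.forall_norm_map_add_sub_le (hx : ∀ z, ‖T x - d‖ ≤ ‖T z - d‖) {w : E}
    (hw : w ∈ LinearMap.ker T) : ∀ z, ‖T (x + w) - d‖ ≤ ‖T z - d‖ := by
  rwa [map_add, LinearMap.mem_ker.mp hw, add_zero]

theorem LinearMap.inner_eq_zero_of_mem_ker_of_forall_norm_le
    (hx : ∀ z, ‖T x - d‖ ≤ ‖T z - d‖)
    (hx_norm : ∀ y, (∀ z, ‖T y - d‖ ≤ ‖T z - d‖) → ‖x‖ ≤ ‖y‖)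
    {w : E} (hw : w ∈ LinearMap.ker T) : ⟪x, w⟫_ℝ = 0 :=
  real_inner_eq_zero_of_forall_norm_le_norm_add_smul fun t ↦
    hx_norm _ (T.forall_norm_map_add_sub_le hx (Submodule.smul_mem _ t hw))

theorem LinearMap.exists_mem_ker_eq_add_of_forall_norm_map_sub_le [StrictConvexSpace ℝ G]
    (hx : ∀ z, ‖T x - d‖ ≤ ‖T z - d‖) (hy : ∀ z, ‖T y - d‖ ≤ ‖T z - d‖) :
    ∃ v ∈ LinearMap.ker T, y = x + v :=
  ⟨y - x, LinearMap.sub_mem_ker_iff.mpr (T.eq_of_forall_norm_map_sub_le hy hx), by abel⟩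

variable [NormedAddCommGroup F] [NormedSpace ℝ F] [StrictConvexSpace ℝ G]
  {S : E →ₗ[ℝ] F} {b : F} {u : E}

theorem lse_decomposed_residual_le (hx : ∀ z, ‖T x - d‖ ≤ ‖T z - d‖)
    (hu : ∀ v ∈ LinearMap.ker T, ‖S u - (b - S x)‖ ≤ ‖S v - (b - S x)‖)
    (hy : ∀ z, ‖T y - d‖ ≤ ‖T z - d‖) : ‖S (x + u) - b‖ ≤ ‖S y - b‖ := by
  obtain ⟨v, hv, rfl⟩ := T.exists_mem_ker_eq_add_of_forall_norm_map_sub_le hx hy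
  have hshift (w : E) : S (x + w) - b = S w - (b - S x) := by rw [map_add]; abel
  simpa only [hshift] using hu v hv

theorem lse_decomposed_norm_le (hx : ∀ z, ‖T x - d‖ ≤ ‖T z - d‖)
    (hx_norm : ∀ y, (∀ z, ‖T y - d‖ ≤ ‖T z - d‖) → ‖x‖ ≤ ‖y‖) (hu_ker : u ∈ LinearMap.ker T)
    (hu_norm : ∀ v ∈ LinearMap.ker T,
      (∀ w ∈ LinearMap.ker T, ‖S v - (b - S x)‖ ≤ ‖S w - (b - S x)‖) → ‖u‖ ≤ ‖v‖)
    (hy : ∀ z, ‖T y - d‖ ≤ ‖T z - d‖)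
    (hy_opt : ∀ z, (∀ w, ‖T z - d‖ ≤ ‖T w - d‖) → ‖S y - b‖ ≤ ‖S z - b‖) :
    ‖x + u‖ ≤ ‖y‖ := by
  obtain ⟨v, hv, rfl⟩ := T.exists_mem_ker_eq_add_of_forall_norm_map_sub_le hx hy
  have hshift (w : E) : S (x + w) - b = S w - (b - S x) := by rw [map_add]; abel
  have hv_opt : ∀ w ∈ LinearMap.ker T, ‖S v - (b - S x)‖ ≤ ‖S w - (b - S x)‖ := fun w hw ↦ by
    simpa only [hshift] using hy_opt _ (T.forall_norm_map_add_sub_le hx hw)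
  exact norm_add_le_norm_add_of_inner_eq_zero
    (T.inner_eq_zero_of_mem_ker_of_forall_norm_le hx hx_norm hu_ker)
    (T.inner_eq_zero_of_mem_ker_of_forall_norm_le hx hx_norm hv) (hu_norm v hv hv_opt)

end LeastSquares

/-- The minimum 2-norm solution of the LSE problem is `x† = C†d + A_{N(C)}†(b − AC†d)`:
with `C†d` the minimum 2-norm minimizer of `‖Cx−d‖` and `A_{N(C)}† y` the minimum 2-norm
minimizer of `‖Ax−y‖` over `N(C)`, the vector `x†` minimizes `‖Ax−b‖` over the set of
minimizers of `‖Cx−d‖` and has minimum norm among all such solutions. -/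
theorem lse_decomposed_solution (m n p : ℕ) (A : Matrix (Fin m) (Fin n) ℝ)
    (C : Matrix (Fin p) (Fin n) ℝ) (b : EuclideanSpace ℝ (Fin m)) (d : EuclideanSpace ℝ (Fin p))
    (Cdag_d : EuclideanSpace ℝ (Fin n))
    (hCdag_min : ∀ y, ‖Matrix.toEuclideanLin C Cdag_d - d‖ ≤ ‖Matrix.toEuclideanLin C y - d‖)
    (hCdag_norm : ∀ y, (∀ z, ‖Matrix.toEuclideanLin C y - d‖ ≤ ‖Matrix.toEuclideanLin C z - d‖) →
      ‖Cdag_d‖ ≤ ‖y‖)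
    (ANdag : EuclideanSpace ℝ (Fin m) → EuclideanSpace ℝ (Fin n))
    (hANdag : ∀ y : EuclideanSpace ℝ (Fin m),
      ANdag y ∈ LinearMap.ker (Matrix.toEuclideanLin C) ∧
      (∀ v ∈ LinearMap.ker (Matrix.toEuclideanLin C),
        ‖Matrix.toEuclideanLin A (ANdag y) - y‖ ≤ ‖Matrix.toEuclideanLin A v - y‖) ∧
      (∀ v ∈ LinearMap.ker (Matrix.toEuclideanLin C),
        (∀ w ∈ LinearMap.ker (Matrix.toEuclideanLin C),
          ‖Matrix.toEuclideanLin A v - y‖ ≤ ‖Matrix.toEuclideanLin A w - y‖) → ‖ANdag y‖ ≤ ‖v‖))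
    (xdag : EuclideanSpace ℝ (Fin n))
    (hxdag : xdag = Cdag_d + ANdag (b - Matrix.toEuclideanLin A Cdag_d)) :
    (∀ y, ‖Matrix.toEuclideanLin C xdag - d‖ ≤ ‖Matrix.toEuclideanLin C y - d‖) ∧
    (∀ y, (∀ z, ‖Matrix.toEuclideanLin C y - d‖ ≤ ‖Matrix.toEuclideanLin C z - d‖) →
      ‖Matrix.toEuclideanLin A xdag - b‖ ≤ ‖Matrix.toEuclideanLin A y - b‖) ∧
    (∀ y, ((∀ z, ‖Matrix.toEuclideanLin C y - d‖ ≤ ‖Matrix.toEuclideanLin C z - d‖) ∧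
        (∀ z, (∀ w, ‖Matrix.toEuclideanLin C z - d‖ ≤ ‖Matrix.toEuclideanLin C w - d‖) →
          ‖Matrix.toEuclideanLin A y - b‖ ≤ ‖Matrix.toEuclideanLin A z - b‖)) →
      ‖xdag‖ ≤ ‖y‖) := by
  obtain ⟨hu_ker, hu_min, hu_norm⟩ := hANdag (b - Matrix.toEuclideanLin A Cdag_d)
  subst hxdag
  exact ⟨(Matrix.toEuclideanLin C).forall_norm_map_add_sub_le hCdag_min hu_ker,
    fun y hy ↦ lse_decomposed_residual_le hCdag_min hu_min hy,
    fun y ⟨hy, hy_opt⟩ ↦ lse_decomposed_norm_le hCdag_min hCdag_norm hu_ker hu_norm hy hy_opt⟩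
end

section
/- Let A ∈ ℝ^{m×n}, C ∈ ℝ^{p×n}. With A_{N(C)}† defined as the operator sending y ∈ ℝᵐ to the minimum 2-norm minimizer of ‖Ax − y‖₂ over x ∈ N(C), and C_A† the weighted pseudoinverse of C with respect to A, the identity (I − A_{N(C)}† A) C† = C_A† holds, where C† is the Moore–Penrose pseudoinverse of C. -/
/-!
Put `u = C† d` and `v = A_{N(C)}† (A u)`. By strict convexity of the norm all least-squares
solutions of `Cx ≈ d` have the same image, so they form the affine space `u + N(C)`, and `u ⟂ N(C)`
because `u` has minimal norm in it. Hence `u - w` with `w ∈ N(C)` solves the weighted problem iff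
`w` minimizes `‖Aw - Au‖` over `N(C)`, and Pythagoras `‖u - w‖² = ‖u‖² + ‖w‖²` makes `u - v` a
solution of minimal norm. The solutions of the weighted problem form a convex set, in which the
minimal-norm point is unique, again by strict convexity.
-/

open Matrix

open scoped RealInnerProductSpace

theorem Convex.eq_of_forall_norm_le {F : Type*} [NormedAddCommGroup F] [NormedSpace ℝ F]
    [StrictConvexSpace ℝ F] {s : Set F} (hs : Convex ℝ s) {x y : F} (hx : x ∈ s) (hy : y ∈ s)
    (hxmin : ∀ z ∈ s, ‖x‖ ≤ ‖z‖) (hymin : ∀ z ∈ s, ‖y‖ ≤ ‖z‖) : x = y := by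
  have hxy : ‖x‖ = ‖y‖ := le_antisymm (hxmin y hy) (hymin x hx)
  have hmid : (1 / 2 : ℝ) • (x + y) ∈ s := by
    simpa [smul_add] using hs hx hy (by norm_num : (0 : ℝ) ≤ 1 / 2) (by norm_num) (by norm_num)
  by_contra hne
  exact ((norm_midpoint_lt_iff hxy).2 hne).not_ge (hxmin _ hmid)

theorem inner_eq_zero_of_forall_norm_le_norm_add_smul {E : Type*} [NormedAddCommGroup E]
    [InnerProductSpace ℝ E] {u w : E} (h : ∀ t : ℝ, ‖u‖ ≤ ‖u + t • w‖) : ⟪u, w⟫ = 0 := by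
  have hquad : ∀ t : ℝ, 0 ≤ ‖w‖ ^ 2 * (t * t) + 2 * ⟪u, w⟫ * t + 0 := fun t => by
    have := pow_le_pow_left₀ (norm_nonneg u) (h t) 2
    rw [norm_add_sq_real, real_inner_smul_right, norm_smul, mul_pow, Real.norm_eq_abs, sq_abs]
      at this
    linarith
  have := discrim_le_zero hquad
  rw [discrim] at this
  nlinarith [sq_nonneg ⟪u, w⟫]

theorem norm_sub_le_norm_sub_of_inner_eq_zero {E : Type*} [NormedAddCommGroup E]
    [InnerProductSpace ℝ E] {u v w : E} (hv : ⟪u, v⟫ = 0) (hw : ⟪u, w⟫ = 0) (hvw : ‖v‖ ≤ ‖w‖) :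
    ‖u - v‖ ≤ ‖u - w‖ := by
  have hv' := norm_sub_sq_eq_norm_sq_add_norm_sq_real hv
  have hw' := norm_sub_sq_eq_norm_sq_add_norm_sq_real hw
  have := mul_self_le_mul_self (norm_nonneg v) hvw
  nlinarith [norm_nonneg (u - v), norm_nonneg (u - w)]

section LeastSquares

variable {E F G : Type*} [AddCommGroup E] [Module ℝ E]
  [NormedAddCommGroup F] [NormedSpace ℝ F] [NormedAddCommGroup G] [NormedSpace ℝ G]
  (L : E →ₗ[ℝ] F) (M : E →ₗ[ℝ] G) (d : F)

def IsLeastSquares (x : E) : Prop := ∀ z, ‖L x - d‖ ≤ ‖L z - d‖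

def IsWeightedLeastSquares (x : E) : Prop :=
  IsLeastSquares L d x ∧ ∀ z, IsLeastSquares L d z → ‖M x‖ ≤ ‖M z‖

variable {L M d}

theorem IsLeastSquares.of_map_eq {x y : E} (hx : IsLeastSquares L d x) (h : L y = L x) :
    IsLeastSquares L d y := by
  intro z
  rw [h]
  exact hx z

theorem IsLeastSquares.map_eq [StrictConvexSpace ℝ F] {x y : E} (hx : IsLeastSquares L d x)
    (hy : IsLeastSquares L d y) : L x = L y := by
  have hrange : Convex ℝ (Set.range fun z => L z - d) := by
    rintro _ ⟨x, rfl⟩ _ ⟨y, rfl⟩ a b _ _ hab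
    refine ⟨a • x + b • y, ?_⟩
    simp only [map_add, map_smul]
    linear_combination (norm := module) hab • d
  have := hrange.eq_of_forall_norm_le ⟨x, rfl⟩ ⟨y, rfl⟩ (by rintro _ ⟨z, rfl⟩; exact hx z)
    (by rintro _ ⟨z, rfl⟩; exact hy z)
  exact sub_left_injective this

theorem convex_setOf_isLeastSquares [StrictConvexSpace ℝ F] :
    Convex ℝ {x | IsLeastSquares L d x} := by
  intro x hx y hy a b _ _ hab
  refine IsLeastSquares.of_map_eq hx ?_
  simp only [map_add, map_smul, ← hx.map_eq hy, ← add_smul, hab, one_smul]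

theorem convex_setOf_isWeightedLeastSquares [StrictConvexSpace ℝ F] :
    Convex ℝ {x | IsWeightedLeastSquares L M d x} := by
  intro x hx y hy a b ha hb hab
  refine ⟨convex_setOf_isLeastSquares hx.1 hy.1 ha hb hab, fun z hz => ?_⟩
  calc ‖M (a • x + b • y)‖ ≤ a * ‖M x‖ + b * ‖M y‖ := by
        rw [map_add, map_smul, map_smul]
        refine (norm_add_le _ _).trans_eq ?_
        rw [norm_smul, norm_smul, Real.norm_of_nonneg ha, Real.norm_of_nonneg hb]
    _ ≤ a * ‖M z‖ + b * ‖M z‖ := by gcongr; exacts [hx.2 z hz, hy.2 z hz]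
    _ = ‖M z‖ := by rw [← add_mul, hab, one_mul]

theorem IsLeastSquares.isWeightedLeastSquares_sub_iff [StrictConvexSpace ℝ F] {u w : E}
    (hu : IsLeastSquares L d u) (hw : w ∈ LinearMap.ker L) :
    IsWeightedLeastSquares L M d (u - w) ↔
      ∀ w' ∈ LinearMap.ker L, ‖M w - M u‖ ≤ ‖M w' - M u‖ := by
  have hsub : ∀ {w}, w ∈ LinearMap.ker L → IsLeastSquares L d (u - w) := fun hw =>
    hu.of_map_eq <| by rw [map_sub, LinearMap.mem_ker.1 hw, sub_zero]
  have hnorm : ∀ w, ‖M w - M u‖ = ‖M (u - w)‖ := fun w => by rw [map_sub, norm_sub_rev]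
  constructor
  · intro h w' hw'
    rw [hnorm, hnorm]
    exact h.2 _ (hsub hw')
  · intro h
    refine ⟨hsub hw, fun z hz => ?_⟩
    have hz' : u - z ∈ LinearMap.ker L := by
      rw [LinearMap.mem_ker, map_sub, hu.map_eq hz, sub_self]
    simpa only [hnorm, sub_sub_cancel] using h _ hz'

end LeastSquares

section MinimalNorm

variable {E F G : Type*} [NormedAddCommGroup E] [InnerProductSpace ℝ E]
  [NormedAddCommGroup F] [NormedSpace ℝ F] [NormedAddCommGroup G] [NormedSpace ℝ G]
  {L : E →ₗ[ℝ] F} {M : E →ₗ[ℝ] G} {d : F}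

theorem IsLeastSquares.inner_eq_zero_of_mem_ker {u w : E} (hu : IsLeastSquares L d u)
    (humin : ∀ y, IsLeastSquares L d y → ‖u‖ ≤ ‖y‖) (hw : w ∈ LinearMap.ker L) : ⟪u, w⟫ = 0 :=
  inner_eq_zero_of_forall_norm_le_norm_add_smul fun t =>
    humin _ <| hu.of_map_eq <| by
      rw [map_add, map_smul, LinearMap.mem_ker.1 hw, smul_zero, add_zero]

theorem IsLeastSquares.norm_sub_le_of_isWeightedLeastSquares [StrictConvexSpace ℝ F]
    {u v y : E} (hu : IsLeastSquares L d u) (humin : ∀ y, IsLeastSquares L d y → ‖u‖ ≤ ‖y‖)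
    (hv : v ∈ LinearMap.ker L)
    (hvmin : ∀ w ∈ LinearMap.ker L,
      (∀ w' ∈ LinearMap.ker L, ‖M w - M u‖ ≤ ‖M w' - M u‖) → ‖v‖ ≤ ‖w‖)
    (hy : IsWeightedLeastSquares L M d y) : ‖u - v‖ ≤ ‖y‖ := by
  have hw : u - y ∈ LinearMap.ker L := by
    rw [LinearMap.mem_ker, map_sub, hu.map_eq hy.1, sub_self]
  rw [← sub_sub_cancel u y] at hy ⊢
  exact norm_sub_le_norm_sub_of_inner_eq_zero (hu.inner_eq_zero_of_mem_ker humin hv)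
    (hu.inner_eq_zero_of_mem_ker humin hw)
    (hvmin _ hw ((hu.isWeightedLeastSquares_sub_iff hw).1 hy))

end MinimalNorm

/-- `(I − A_{N(C)}† A) C† = C_A†`, where `C† d` is the minimum 2-norm minimizer of `‖Cx−d‖`,
`A_{N(C)}† y` is the minimum 2-norm minimizer of `‖Ax−y‖` over `N(C)`, and `C_A† d` is the
minimum 2-norm solution of the GLS problem `min ‖Ax‖ s.t. ‖Cx−d‖ minimal`. -/
theorem weighted_pinv_identity (m n p : ℕ) (A : Matrix (Fin m) (Fin n) ℝ)
    (C : Matrix (Fin p) (Fin n) ℝ)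
    (Cdag : EuclideanSpace ℝ (Fin p) → EuclideanSpace ℝ (Fin n))
    (hCdag : ∀ d : EuclideanSpace ℝ (Fin p),
      (∀ y, ‖Matrix.toEuclideanLin C (Cdag d) - d‖ ≤ ‖Matrix.toEuclideanLin C y - d‖) ∧
      (∀ y, (∀ z, ‖Matrix.toEuclideanLin C y - d‖ ≤ ‖Matrix.toEuclideanLin C z - d‖) →
        ‖Cdag d‖ ≤ ‖y‖))
    (ANdag : EuclideanSpace ℝ (Fin m) → EuclideanSpace ℝ (Fin n))
    (hANdag : ∀ y : EuclideanSpace ℝ (Fin m),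
      ANdag y ∈ LinearMap.ker (Matrix.toEuclideanLin C) ∧
      (∀ v ∈ LinearMap.ker (Matrix.toEuclideanLin C),
        ‖Matrix.toEuclideanLin A (ANdag y) - y‖ ≤ ‖Matrix.toEuclideanLin A v - y‖) ∧
      (∀ v ∈ LinearMap.ker (Matrix.toEuclideanLin C),
        (∀ w ∈ LinearMap.ker (Matrix.toEuclideanLin C),
          ‖Matrix.toEuclideanLin A v - y‖ ≤ ‖Matrix.toEuclideanLin A w - y‖) → ‖ANdag y‖ ≤ ‖v‖))
    (CAdag : EuclideanSpace ℝ (Fin p) → EuclideanSpace ℝ (Fin n))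
    (hCAdag : ∀ d : EuclideanSpace ℝ (Fin p),
      (∀ y, ‖Matrix.toEuclideanLin C (CAdag d) - d‖ ≤ ‖Matrix.toEuclideanLin C y - d‖) ∧
      (∀ y, (∀ z, ‖Matrix.toEuclideanLin C y - d‖ ≤ ‖Matrix.toEuclideanLin C z - d‖) →
        ‖Matrix.toEuclideanLin A (CAdag d)‖ ≤ ‖Matrix.toEuclideanLin A y‖) ∧
      (∀ y, ((∀ z, ‖Matrix.toEuclideanLin C y - d‖ ≤ ‖Matrix.toEuclideanLin C z - d‖) ∧
          (∀ z, (∀ w, ‖Matrix.toEuclideanLin C z - d‖ ≤ ‖Matrix.toEuclideanLin C w - d‖) →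
            ‖Matrix.toEuclideanLin A y‖ ≤ ‖Matrix.toEuclideanLin A z‖)) → ‖CAdag d‖ ≤ ‖y‖)) :
    ∀ d : EuclideanSpace ℝ (Fin p),
      Cdag d - ANdag (Matrix.toEuclideanLin A (Cdag d)) = CAdag d := by
  intro d
  obtain ⟨hu, humin⟩ := hCdag d
  obtain ⟨hv, hvfit, hvmin⟩ := hANdag (toEuclideanLin A (Cdag d))
  obtain ⟨hc, hcfit, hcmin⟩ := hCAdag d
  have hu : IsLeastSquares (toEuclideanLin C) d (Cdag d) := hu
  exact convex_setOf_isWeightedLeastSquares.eq_of_forall_norm_le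
    ((hu.isWeightedLeastSquares_sub_iff hv).2 hvfit) ⟨hc, hcfit⟩
    (fun _ => hu.norm_sub_le_of_isWeightedLeastSquares humin hv hvmin) hcmin
end

section
/- Let A ∈ ℝ^{m×n}, C ∈ ℝ^{p×n}, b ∈ ℝᵐ, and set x₂ = (P_{R(G)} − C_A† C) A† b with G = AᵀA + CᵀC. Then C x₂ = 0. -/
open Matrix

/-!
Write `G = AᵀA + CᵀC`. Since `⟪G v, v⟫ = ‖A v‖² + ‖C v‖²`, the kernel of `G` is `N(A) ∩ N(C)`,
and as `G` is symmetric, `R(G)ᗮ = N(G) ⊆ N(C)`; hence `C P_{R(G)} x = C x` for every `x`.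
On the other hand `d = C x` lies in the range of `C`, so any least-squares solution `y` of
`C y ≈ d` solves it exactly, which is `C C_A† C = C`. The two identities cancel.
-/

namespace LinearMap

variable {𝕜 E F G : Type*} [RCLike 𝕜]
  [NormedAddCommGroup E] [InnerProductSpace 𝕜 E] [FiniteDimensional 𝕜 E]
  [NormedAddCommGroup F] [InnerProductSpace 𝕜 F] [FiniteDimensional 𝕜 F]
  [NormedAddCommGroup G] [InnerProductSpace 𝕜 G] [FiniteDimensional 𝕜 G]

theorem inner_adjoint_comp_self_add_apply_self (A : E →ₗ[𝕜] F) (C : E →ₗ[𝕜] G) (v : E) :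
    inner 𝕜 ((A.adjoint ∘ₗ A + C.adjoint ∘ₗ C) v) v = ((‖A v‖ ^ 2 + ‖C v‖ ^ 2 : ℝ) : 𝕜) := by
  simp only [add_apply, comp_apply, inner_add_left, adjoint_inner_left,
    inner_self_eq_norm_sq_to_K, RCLike.ofReal_add, RCLike.ofReal_pow]

theorem ker_adjoint_comp_self_add (A : E →ₗ[𝕜] F) (C : E →ₗ[𝕜] G) :
    ker (A.adjoint ∘ₗ A + C.adjoint ∘ₗ C) = ker A ⊓ ker C := by
  ext v
  simp only [Submodule.mem_inf, mem_ker]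
  constructor
  · intro hv
    have hsum : ‖A v‖ ^ 2 + ‖C v‖ ^ 2 = 0 := by
      have h := inner_adjoint_comp_self_add_apply_self A C v
      rw [hv, inner_zero_left] at h
      exact_mod_cast h.symm
    constructor <;> rw [← norm_eq_zero] <;> nlinarith [sq_nonneg ‖A v‖, sq_nonneg ‖C v‖]
  · rintro ⟨hA, hC⟩
    simp [hA, hC]

theorem orthogonal_range_adjoint_comp_self_add (A : E →ₗ[𝕜] F) (C : E →ₗ[𝕜] G) :
    (range (A.adjoint ∘ₗ A + C.adjoint ∘ₗ C))ᗮ = ker A ⊓ ker C := by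
  rw [((isPositive_adjoint_comp_self A).add (isPositive_adjoint_comp_self C)).isSymmetric
    |>.orthogonal_range, ker_adjoint_comp_self_add]

theorem apply_starProjection_range_adjoint_comp_self_add (A : E →ₗ[𝕜] F) (C : E →ₗ[𝕜] G)
    (x : E) : C ((range (A.adjoint ∘ₗ A + C.adjoint ∘ₗ C)).starProjection x) = C x := by
  have hx := Submodule.sub_starProjection_mem_orthogonal
    (K := range (A.adjoint ∘ₗ A + C.adjoint ∘ₗ C)) x
  rw [orthogonal_range_adjoint_comp_self_add] at hx
  have hCx : C (x - _) = 0 := hx.2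
  rwa [map_sub, sub_eq_zero, eq_comm] at hCx

end LinearMap

theorem Matrix.toEuclideanLin_transpose_mul_self_add {m n p : Type*} [Fintype m] [Fintype n]
    [Fintype p] [DecidableEq m] [DecidableEq n] [DecidableEq p]
    (A : Matrix m n ℝ) (C : Matrix p n ℝ) :
    toEuclideanLin (Aᵀ * A + Cᵀ * C) =
      (toEuclideanLin A).adjoint ∘ₗ toEuclideanLin A +
        (toEuclideanLin C).adjoint ∘ₗ toEuclideanLin C := by
  rw [map_add, toLpLin_mul_same, toLpLin_mul_same, ← conjTranspose_eq_transpose_of_trivial,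
    ← conjTranspose_eq_transpose_of_trivial, toEuclideanLin_conjTranspose_eq_adjoint,
    toEuclideanLin_conjTranspose_eq_adjoint]

theorem eq_of_norm_sub_le_norm_sub_self {α E : Type*} [NormedAddCommGroup E] (f : α → E)
    {x y : α} (hy : ‖f y - f x‖ ≤ ‖f x - f x‖) : f y = f x := by
  rwa [sub_self, norm_zero, norm_le_zero_iff, sub_eq_zero] at hy

theorem x2_in_null_C_general (m n p : ℕ) (A : Matrix (Fin m) (Fin n) ℝ)
    (C : Matrix (Fin p) (Fin n) ℝ)
    (Adag_b : EuclideanSpace ℝ (Fin n))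
    (CAdag : EuclideanSpace ℝ (Fin p) → EuclideanSpace ℝ (Fin n))
    (hCAdag : ∀ d : EuclideanSpace ℝ (Fin p),
      (∀ y, ‖Matrix.toEuclideanLin C (CAdag d) - d‖ ≤ ‖Matrix.toEuclideanLin C y - d‖) ∧
      (∀ y, (∀ z, ‖Matrix.toEuclideanLin C y - d‖ ≤ ‖Matrix.toEuclideanLin C z - d‖) →
        ‖Matrix.toEuclideanLin A (CAdag d)‖ ≤ ‖Matrix.toEuclideanLin A y‖) ∧
      (∀ y, ((∀ z, ‖Matrix.toEuclideanLin C y - d‖ ≤ ‖Matrix.toEuclideanLin C z - d‖) ∧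
          (∀ z, (∀ w, ‖Matrix.toEuclideanLin C z - d‖ ≤ ‖Matrix.toEuclideanLin C w - d‖) →
            ‖Matrix.toEuclideanLin A y‖ ≤ ‖Matrix.toEuclideanLin A z‖)) → ‖CAdag d‖ ≤ ‖y‖)) :
    Matrix.toEuclideanLin C
        ((↑(Submodule.orthogonalProjection
              (LinearMap.range (Matrix.toEuclideanLin (Aᵀ * A + Cᵀ * C))) Adag_b) :
            EuclideanSpace ℝ (Fin n)) - CAdag (Matrix.toEuclideanLin C Adag_b)) = 0 := by
  have hCCdagC : toEuclideanLin C (CAdag (toEuclideanLin C Adag_b)) = toEuclideanLin C Adag_b :=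
    eq_of_norm_sub_le_norm_sub_self (toEuclideanLin C) ((hCAdag _).1 Adag_b)
  have hCP : toEuclideanLin C
      ((LinearMap.range (toEuclideanLin (Aᵀ * A + Cᵀ * C))).starProjection Adag_b) =
        toEuclideanLin C Adag_b := by
    rw [toEuclideanLin_transpose_mul_self_add]
    exact LinearMap.apply_starProjection_range_adjoint_comp_self_add _ _ Adag_b
  rw [map_sub, hCCdagC]
  exact sub_eq_zero.mpr hCP

/-- With `x₂ = (P_{R(G)} − C_A† C) A† b`, `G = AᵀA + CᵀC`, one has `C x₂ = 0`. -/
theorem x2_in_null_C (m n p : ℕ) (A : Matrix (Fin m) (Fin n) ℝ)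
    (C : Matrix (Fin p) (Fin n) ℝ) (b : EuclideanSpace ℝ (Fin m))
    (Adag_b : EuclideanSpace ℝ (Fin n))
    (hAdag_min : ∀ y, ‖Matrix.toEuclideanLin A Adag_b - b‖ ≤ ‖Matrix.toEuclideanLin A y - b‖)
    (hAdag_norm : ∀ y, (∀ z, ‖Matrix.toEuclideanLin A y - b‖ ≤ ‖Matrix.toEuclideanLin A z - b‖) →
      ‖Adag_b‖ ≤ ‖y‖)
    (CAdag : EuclideanSpace ℝ (Fin p) → EuclideanSpace ℝ (Fin n))
    (hCAdag : ∀ d : EuclideanSpace ℝ (Fin p),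
      (∀ y, ‖Matrix.toEuclideanLin C (CAdag d) - d‖ ≤ ‖Matrix.toEuclideanLin C y - d‖) ∧
      (∀ y, (∀ z, ‖Matrix.toEuclideanLin C y - d‖ ≤ ‖Matrix.toEuclideanLin C z - d‖) →
        ‖Matrix.toEuclideanLin A (CAdag d)‖ ≤ ‖Matrix.toEuclideanLin A y‖) ∧
      (∀ y, ((∀ z, ‖Matrix.toEuclideanLin C y - d‖ ≤ ‖Matrix.toEuclideanLin C z - d‖) ∧
          (∀ z, (∀ w, ‖Matrix.toEuclideanLin C z - d‖ ≤ ‖Matrix.toEuclideanLin C w - d‖) →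
            ‖Matrix.toEuclideanLin A y‖ ≤ ‖Matrix.toEuclideanLin A z‖)) → ‖CAdag d‖ ≤ ‖y‖)) :
    Matrix.toEuclideanLin C
        ((↑(Submodule.orthogonalProjection
              (LinearMap.range (Matrix.toEuclideanLin (Aᵀ * A + Cᵀ * C))) Adag_b) :
            EuclideanSpace ℝ (Fin n)) - CAdag (Matrix.toEuclideanLin C Adag_b)) = 0 :=
  x2_in_null_C_general m n p A C Adag_b CAdag hCAdag
end

section
/- Let A ∈ ℝ^{m×n}, b ∈ ℝᵐ, and suppose x_k = Q_k y_k where Q_{k+1} ∈ ℝ^{n×(k+1)} has orthonormal columns contained in a subspace N, A Q_k = P_{k+1} B_k with P_{k+1} ∈ ℝ^{m×(k+1)} having orthonormal columns and P_{k+1} e₁ δ₁ = b, P_N Aᵀ P_{k+1} = Q_k B_kᵀ + γ_{k+1} q_{k+1} e_{k+1}ᵀ, and y_k minimizes ‖B_k y − δ₁e₁‖₂. If γ_{k+1} δ_{k+1} = 0 (termination), then P_N Aᵀ(A x_k − b) = 0, i.e., x_k satisfies the normal equations of the least squares problem min_{x∈N} ‖Ax − b‖₂. -/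
/-!
Since `A Q_k = P_{k+1} B_k` and `b = P_{k+1} δ₁e₁`, the residual is `A x_k − b = P_{k+1} r_k` with
`r_k = B_k y_k − δ₁e₁`. The adjoint relation then gives
`P_N Aᵀ(A x_k − b) = Q_k B_kᵀ r_k + γ_{k+1} (e_{k+1}ᵀ r_k) q_{k+1}`. The first term vanishes because
`y_k` is a least-squares solution, and `e_{k+1}ᵀ r_k = δ_{k+1} e_kᵀ y_k` because the last row of
`B_k` is `δ_{k+1} e_kᵀ`, so the second term carries the factor `γ_{k+1} δ_{k+1} = 0`.
-/

open Matrix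

theorem LinearMap.inner_apply_sub_apply_eq_zero_of_forall_norm_le {E F : Type*}
    [AddCommGroup E] [Module ℝ E] [NormedAddCommGroup F] [InnerProductSpace ℝ F]
    {f : E →ₗ[ℝ] F} {c : F} {y₀ : E} (hmin : ∀ y, ‖f y₀ - c‖ ≤ ‖f y - c‖) (z : E) :
    inner ℝ (f y₀ - c) (f z) = 0 := by
  have hinf : ‖c - f y₀‖ = ⨅ w : (range f : Set F), ‖c - w‖ := by
    refine le_antisymm (le_ciInf ?_) (ciInf_le ⟨0, ?_⟩ (⟨f y₀, y₀, rfl⟩ : (range f : Set F)))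
    · rintro ⟨_, y, rfl⟩
      simpa only [norm_sub_rev] using hmin y
    · rintro _ ⟨w, rfl⟩
      exact norm_nonneg _
  have horth :=
    ((range f).norm_eq_iInf_iff_real_inner_eq_zero ⟨y₀, rfl⟩).1 hinf (f z) ⟨z, rfl⟩
  rw [← neg_sub, inner_neg_left, horth, neg_zero]

theorem LinearMap.adjoint_apply_sub_eq_zero_of_forall_norm_le {E F : Type*}
    [NormedAddCommGroup E] [InnerProductSpace ℝ E] [FiniteDimensional ℝ E]
    [NormedAddCommGroup F] [InnerProductSpace ℝ F] [FiniteDimensional ℝ F]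
    {f : E →ₗ[ℝ] F} {c : F} {y₀ : E} (hmin : ∀ y, ‖f y₀ - c‖ ≤ ‖f y - c‖) :
    LinearMap.adjoint f (f y₀ - c) = 0 := by
  rw [← inner_self_eq_zero (𝕜 := ℝ), LinearMap.adjoint_inner_left]
  exact f.inner_apply_sub_apply_eq_zero_of_forall_norm_le hmin _

theorem Matrix.toEuclideanLin_transpose_eq_adjoint {m n : Type*} [Fintype m] [DecidableEq m]
    [Fintype n] [DecidableEq n] (B : Matrix m n ℝ) :
    toEuclideanLin Bᵀ = LinearMap.adjoint (toEuclideanLin B) := by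
  rw [← conjTranspose_eq_transpose_of_trivial, toEuclideanLin_conjTranspose_eq_adjoint]

theorem Matrix.toEuclideanLin_mul_apply {𝕜 l m n : Type*} [RCLike 𝕜] [Fintype m] [DecidableEq m]
    [Fintype n] [DecidableEq n] (A : Matrix l m 𝕜) (B : Matrix m n 𝕜) (v : EuclideanSpace 𝕜 n) :
    toEuclideanLin (A * B) v = toEuclideanLin A (toEuclideanLin B v) := by
  simp

theorem Matrix.toEuclideanLin_apply_of_row_eq_single {𝕜 m n : Type*} [RCLike 𝕜] [Fintype n]
    [DecidableEq n] {B : Matrix m n 𝕜} {i : m} {j : n} {d : 𝕜} (hrow : B i = Pi.single j d)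
    (v : EuclideanSpace 𝕜 n) : toEuclideanLin B v i = d * v j := by
  simp [toLpLin_apply, mulVec, hrow]

theorem nsr_gkb_termination_general (m n k : ℕ) (A : Matrix (Fin m) (Fin n) ℝ)
    (N : Submodule ℝ (EuclideanSpace ℝ (Fin n)))
    (Qk : Matrix (Fin n) (Fin (k + 1)) ℝ) (Pk : Matrix (Fin m) (Fin (k + 2)) ℝ)
    (Bk : Matrix (Fin (k + 2)) (Fin (k + 1)) ℝ)
    (b : EuclideanSpace ℝ (Fin m)) (q : EuclideanSpace ℝ (Fin n))
    (yk : EuclideanSpace ℝ (Fin (k + 1))) (xk : EuclideanSpace ℝ (Fin n))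
    (δ1 γlast δlast : ℝ)
    (hb : Matrix.toEuclideanLin Pk (EuclideanSpace.single (0 : Fin (k + 2)) δ1) = b)
    (hAQ : A * Qk = Pk * Bk)
    (hadj : ∀ u : EuclideanSpace ℝ (Fin (k + 2)),
      (↑(Submodule.orthogonalProjection N
            (Matrix.toEuclideanLin Aᵀ (Matrix.toEuclideanLin Pk u))) :
          EuclideanSpace ℝ (Fin n)) =
        Matrix.toEuclideanLin Qk (Matrix.toEuclideanLin Bkᵀ u) +
          (γlast * u (Fin.last (k + 1))) • q)
    (hBlast : ∀ j : Fin (k + 1),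
      Bk (Fin.last (k + 1)) j = if j = Fin.last k then δlast else 0)
    (hterm : γlast * δlast = 0)
    (hyk : ∀ y : EuclideanSpace ℝ (Fin (k + 1)),
      ‖Matrix.toEuclideanLin Bk yk - EuclideanSpace.single (0 : Fin (k + 2)) δ1‖ ≤
        ‖Matrix.toEuclideanLin Bk y - EuclideanSpace.single (0 : Fin (k + 2)) δ1‖)
    (hxk : xk = Matrix.toEuclideanLin Qk yk) :
    (↑(Submodule.orthogonalProjection N
          (Matrix.toEuclideanLin Aᵀ (Matrix.toEuclideanLin A xk - b))) :
        EuclideanSpace ℝ (Fin n)) = 0 := by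
  set r := toEuclideanLin Bk yk - EuclideanSpace.single (0 : Fin (k + 2)) δ1
  have hres : toEuclideanLin A xk - b = toEuclideanLin Pk r := by
    rw [map_sub, hb, hxk, ← toEuclideanLin_mul_apply, hAQ, toEuclideanLin_mul_apply]
  have hnormal : toEuclideanLin Bkᵀ r = 0 := by
    rw [toEuclideanLin_transpose_eq_adjoint]
    exact LinearMap.adjoint_apply_sub_eq_zero_of_forall_norm_le hyk
  have hlast : r (Fin.last (k + 1)) = δlast * yk (Fin.last k) := by
    have hrow : Bk (Fin.last (k + 1)) = Pi.single (Fin.last k) δlast := by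
      ext j
      rw [hBlast, Pi.single_apply]
    simp [r, toEuclideanLin_apply_of_row_eq_single hrow, Fin.last_pos.ne']
  rw [hres, hadj, hnormal, hlast, ← mul_assoc, hterm, zero_mul, zero_smul, map_zero, zero_add]

/-- Termination of the null-space-restricted Golub–Kahan bidiagonalization: under the
matrix-form relations, if `γ_{k+1} δ_{k+1} = 0` and `y_k` minimizes `‖B_k y − δ₁e₁‖`, then
`x_k = Q_k y_k` satisfies the normal equations `P_N Aᵀ(A x_k − b) = 0` of
`min_{x ∈ N} ‖Ax − b‖`. -/
theorem nsr_gkb_termination (m n k : ℕ) (A : Matrix (Fin m) (Fin n) ℝ)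
    (N : Submodule ℝ (EuclideanSpace ℝ (Fin n)))
    (Qk : Matrix (Fin n) (Fin (k + 1)) ℝ) (Pk : Matrix (Fin m) (Fin (k + 2)) ℝ)
    (Bk : Matrix (Fin (k + 2)) (Fin (k + 1)) ℝ)
    (b : EuclideanSpace ℝ (Fin m)) (q : EuclideanSpace ℝ (Fin n))
    (yk : EuclideanSpace ℝ (Fin (k + 1))) (xk : EuclideanSpace ℝ (Fin n))
    (δ1 γlast δlast : ℝ)
    (hQorth : Qkᵀ * Qk = 1)
    (hQN : ∀ j : Fin (k + 1),
      Matrix.toEuclideanLin Qk (EuclideanSpace.single j (1 : ℝ)) ∈ N)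
    (hPorth : Pkᵀ * Pk = 1)
    (hb : Matrix.toEuclideanLin Pk (EuclideanSpace.single (0 : Fin (k + 2)) δ1) = b)
    (hAQ : A * Qk = Pk * Bk)
    (hadj : ∀ u : EuclideanSpace ℝ (Fin (k + 2)),
      (↑(Submodule.orthogonalProjection N
            (Matrix.toEuclideanLin Aᵀ (Matrix.toEuclideanLin Pk u))) :
          EuclideanSpace ℝ (Fin n)) =
        Matrix.toEuclideanLin Qk (Matrix.toEuclideanLin Bkᵀ u) +
          (γlast * u (Fin.last (k + 1))) • q)
    (hqN : q ∈ N)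
    (hBlast : ∀ j : Fin (k + 1),
      Bk (Fin.last (k + 1)) j = if j = Fin.last k then δlast else 0)
    (hterm : γlast * δlast = 0)
    (hyk : ∀ y : EuclideanSpace ℝ (Fin (k + 1)),
      ‖Matrix.toEuclideanLin Bk yk - EuclideanSpace.single (0 : Fin (k + 2)) δ1‖ ≤
        ‖Matrix.toEuclideanLin Bk y - EuclideanSpace.single (0 : Fin (k + 2)) δ1‖)
    (hxk : xk = Matrix.toEuclideanLin Qk yk) :
    (↑(Submodule.orthogonalProjection N
          (Matrix.toEuclideanLin Aᵀ (Matrix.toEuclideanLin A xk - b))) :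
        EuclideanSpace ℝ (Fin n)) = 0 :=
  nsr_gkb_termination_general m n k A N Qk Pk Bk b q yk xk δ1 γlast δlast hb hAQ hadj hBlast hterm
    hyk hxk
end

section
/- Let A ∈ ℝ^{m×n}, C ∈ ℝ^{p×n}, G = AᵀA + CᵀC. Suppose x ∈ R(G) is a minimizer of ‖Ax−b‖₂ over the set of minimizers of ‖Cx−d‖₂, and so is x' ∈ R(G). Then x = x', i.e., the LSE problem has a unique solution in the range of G, and this solution has minimum Euclidean norm among all solutions. -/
/-!
In a strictly convex space two minimizers of `‖f y - b‖` over a convex set have the same image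
under `f`, since their midpoint would otherwise do strictly better. Applied first to `C` and then
to `A` (the set of minimizers of `‖C y - d‖` is convex), any two LSE solutions `u`, `v` satisfy
`A u = A v` and `C u = C v`. As `⟪G w, u - v⟫ = ⟪A w, A (u - v)⟫ + ⟪C w, C (u - v)⟫`, the
difference `u - v` is orthogonal to `R(G)`, so a solution lying in `R(G)` is the orthogonal
projection of every solution onto `R(G)`: it is unique and has the smallest norm.
-/

open Matrix Set

section LeastSquares

variable {E F F' : Type*} [AddCommGroup E] [Module ℝ E]
  [NormedAddCommGroup F] [NormedSpace ℝ F] [NormedAddCommGroup F'] [NormedSpace ℝ F']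

def IsLSESolution (f : E →ₗ[ℝ] F) (g : E →ₗ[ℝ] F') (b : F) (d : F') (x : E) : Prop :=
  IsMinOn (fun y ↦ ‖g y - d‖) univ x ∧
    IsMinOn (fun y ↦ ‖f y - b‖) {y | IsMinOn (fun y ↦ ‖g y - d‖) univ y} x

theorem isLSESolution_iff {f : E →ₗ[ℝ] F} {g : E →ₗ[ℝ] F'} {b : F} {d : F'} {x : E} :
    IsLSESolution f g b d x ↔ (∀ y, ‖g x - d‖ ≤ ‖g y - d‖) ∧
      ∀ y, (∀ z, ‖g y - d‖ ≤ ‖g z - d‖) → ‖f x - b‖ ≤ ‖f y - b‖ := by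
  simp only [IsLSESolution, isMinOn_iff, mem_ofPred_eq, mem_univ, forall_const]

variable [StrictConvexSpace ℝ F] [StrictConvexSpace ℝ F']

theorem LinearMap.map_eq_of_isMinOn_norm_sub {f : E →ₗ[ℝ] F} {b : F} {s : Set E}
    (hs : Convex ℝ s) {u v : E} (hu : u ∈ s) (hv : v ∈ s)
    (hmu : IsMinOn (fun y ↦ ‖f y - b‖) s u) (hmv : IsMinOn (fun y ↦ ‖f y - b‖) s v) :
    f u = f v := by
  have hnorm : ‖f u - b‖ = ‖f v - b‖ := le_antisymm (hmu hv) (hmv hu)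
  have hmid : (1 / 2 : ℝ) • u + (1 / 2 : ℝ) • v ∈ s :=
    hs hu hv (by norm_num) (by norm_num) (by norm_num)
  have hcomb : f ((1 / 2 : ℝ) • u + (1 / 2 : ℝ) • v) - b =
      (1 / 2 : ℝ) • ((f u - b) + (f v - b)) := by
    rw [map_add, map_smul, map_smul]
    module
  have hle : ‖f u - b‖ ≤ ‖(1 / 2 : ℝ) • ((f u - b) + (f v - b))‖ := by
    simpa only [hcomb] using isMinOn_iff.1 hmu _ hmid
  by_contra hne
  exact hle.not_gt ((norm_midpoint_lt_iff hnorm).2 (sub_left_injective.ne hne))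

theorem convex_setOf_isMinOn_univ_norm_sub (f : E →ₗ[ℝ] F) (b : F) :
    Convex ℝ {y | IsMinOn (fun y ↦ ‖f y - b‖) univ y} := by
  intro u hu v hv s t _ _ hst
  have huv : f u = f v := f.map_eq_of_isMinOn_norm_sub convex_univ trivial trivial hu hv
  have hcomb : f (s • u + t • v) = f u := by
    rw [map_add, map_smul, map_smul, ← huv, ← add_smul, hst, one_smul]
  change IsMinOn (fun y ↦ ‖f y - b‖) univ u at hu
  change IsMinOn (fun y ↦ ‖f y - b‖) univ (s • u + t • v)
  exact isMinOn_univ_iff.2 fun z ↦ by simpa only [hcomb] using isMinOn_univ_iff.1 hu z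

theorem IsLSESolution.map_eq {f : E →ₗ[ℝ] F} {g : E →ₗ[ℝ] F'} {b : F} {d : F'} {u v : E}
    (hu : IsLSESolution f g b d u) (hv : IsLSESolution f g b d v) : f u = f v ∧ g u = g v :=
  ⟨f.map_eq_of_isMinOn_norm_sub (convex_setOf_isMinOn_univ_norm_sub g d) hu.1 hv.1 hu.2 hv.2,
    g.map_eq_of_isMinOn_norm_sub convex_univ trivial trivial hu.1 hv.1⟩

end LeastSquares

section Gram

variable {m n p : Type*} [Fintype m] [Fintype n] [Fintype p] [DecidableEq n]

theorem Matrix.inner_toEuclideanLin_transpose_mul_self (A : Matrix m n ℝ)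
    (u v : EuclideanSpace ℝ n) :
    inner ℝ (toEuclideanLin (Aᵀ * A) u) v = inner ℝ (toEuclideanLin A u) (toEuclideanLin A v) := by
  classical
  rw [toLpLin_mul_same, LinearMap.comp_apply, ← conjTranspose_eq_transpose_of_trivial,
    toEuclideanLin_conjTranspose_eq_adjoint, LinearMap.adjoint_inner_left]

theorem Matrix.sub_mem_orthogonal_range_gram {A : Matrix m n ℝ} {C : Matrix p n ℝ}
    {u v : EuclideanSpace ℝ n} (hA : toEuclideanLin A u = toEuclideanLin A v)
    (hC : toEuclideanLin C u = toEuclideanLin C v) :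
    u - v ∈ (LinearMap.range (toEuclideanLin (Aᵀ * A + Cᵀ * C)))ᗮ := by
  rintro _ ⟨w, rfl⟩
  rw [map_add, LinearMap.add_apply, inner_add_left, inner_toEuclideanLin_transpose_mul_self,
    inner_toEuclideanLin_transpose_mul_self, map_sub, map_sub, hA, hC, sub_self, sub_self,
    inner_zero_right, inner_zero_right, add_zero]

theorem IsLSESolution.starProjection_eq {A : Matrix m n ℝ} {C : Matrix p n ℝ}
    {b : EuclideanSpace ℝ m} {d : EuclideanSpace ℝ p} {x y : EuclideanSpace ℝ n}
    (hx : IsLSESolution (toEuclideanLin A) (toEuclideanLin C) b d x)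
    (hxR : x ∈ LinearMap.range (toEuclideanLin (Aᵀ * A + Cᵀ * C)))
    (hy : IsLSESolution (toEuclideanLin A) (toEuclideanLin C) b d y) :
    (LinearMap.range (toEuclideanLin (Aᵀ * A + Cᵀ * C))).starProjection y = x :=
  have ⟨hA, hC⟩ := hy.map_eq hx
  Submodule.eq_starProjection_of_mem_orthogonal hxR (sub_mem_orthogonal_range_gram hA hC)

end Gram

/-- The LSE problem has a unique solution in `R(G)`, `G = AᵀA + CᵀC`, and this solution has
minimum Euclidean norm among all solutions. -/
theorem lse_unique_in_range_G (m n p : ℕ) (A : Matrix (Fin m) (Fin n) ℝ)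
    (C : Matrix (Fin p) (Fin n) ℝ) (b : EuclideanSpace ℝ (Fin m)) (d : EuclideanSpace ℝ (Fin p))
    (x x' : EuclideanSpace ℝ (Fin n))
    (hxR : x ∈ LinearMap.range (Matrix.toEuclideanLin (Aᵀ * A + Cᵀ * C)))
    (hx'R : x' ∈ LinearMap.range (Matrix.toEuclideanLin (Aᵀ * A + Cᵀ * C)))
    (hx_feas : ∀ y, ‖Matrix.toEuclideanLin C x - d‖ ≤ ‖Matrix.toEuclideanLin C y - d‖)
    (hx_min : ∀ y, (∀ z, ‖Matrix.toEuclideanLin C y - d‖ ≤ ‖Matrix.toEuclideanLin C z - d‖) →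
      ‖Matrix.toEuclideanLin A x - b‖ ≤ ‖Matrix.toEuclideanLin A y - b‖)
    (hx'_feas : ∀ y, ‖Matrix.toEuclideanLin C x' - d‖ ≤ ‖Matrix.toEuclideanLin C y - d‖)
    (hx'_min : ∀ y, (∀ z, ‖Matrix.toEuclideanLin C y - d‖ ≤ ‖Matrix.toEuclideanLin C z - d‖) →
      ‖Matrix.toEuclideanLin A x' - b‖ ≤ ‖Matrix.toEuclideanLin A y - b‖) :
    x = x' ∧
    ∀ y, ((∀ z, ‖Matrix.toEuclideanLin C y - d‖ ≤ ‖Matrix.toEuclideanLin C z - d‖) ∧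
        (∀ z, (∀ w, ‖Matrix.toEuclideanLin C z - d‖ ≤ ‖Matrix.toEuclideanLin C w - d‖) →
          ‖Matrix.toEuclideanLin A y - b‖ ≤ ‖Matrix.toEuclideanLin A z - b‖)) →
      ‖x‖ ≤ ‖y‖ := by
  have hx := isLSESolution_iff.2 ⟨hx_feas, hx_min⟩
  have hx' := isLSESolution_iff.2 ⟨hx'_feas, hx'_min⟩
  constructor
  · rw [← hx.starProjection_eq hxR hx', Submodule.starProjection_eq_self_iff.2 hx'R]
  · intro y hy
    rw [← hx.starProjection_eq hxR (isLSESolution_iff.2 hy)]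
    exact Submodule.norm_starProjection_apply_le _ y
end
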